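/- arXiv:2010.06383 — 2 statements merged into one kernel-verified Lean document; each statement's English description precedes it below -/
import Mathlib

section
/- Let ρ, σ, τ be non-degenerate density matrices. If [c_ρ(σ)]^K_ρ = [c_ρ(τ)]^K_ρ, then σ = τ. In other words, if the exponential arcs connecting σ and τ to ρ have the same tangent vector at t = 0, they coincide. -/
open MeasureTheory
open scoped ComplexOrder

attribute [local instance] Matrix.frobeniusNormedAddCommGroup Matrix.frobeniusNormedSpace

variable {n : ℕ}

/-- The matrix exponential. -/
noncomputable def mexp (A : Matrix (Fin n) (Fin n) ℂ) : Matrix (Fin n) (Fin n) ℂ :=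
  NormedSpace.exp A

/-- The matrix logarithm, defined by (real) functional calculus; meaningful on
positive definite matrices. -/
noncomputable def mlog (A : Matrix (Fin n) (Fin n) ℂ) : Matrix (Fin n) (Fin n) ℂ :=
  cfc Real.log A

/-- Real powers of a matrix, defined by (real) functional calculus; meaningful on
positive definite matrices. -/
noncomputable def mpow (A : Matrix (Fin n) (Fin n) ℂ) (u : ℝ) : Matrix (Fin n) (Fin n) ℂ :=
  cfc (fun x : ℝ => x ^ u) A

/-- Umegaki's relative entropy `D(ρ‖σ) = Tr ρ (log ρ - log σ)` (a real number). -/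
noncomputable def relEnt (ρ σ : Matrix (Fin n) (Fin n) ℂ) : ℝ :=
  (Matrix.trace (ρ * (mlog ρ - mlog σ))).re

/-- The Kubo transform `[A]^K_ρ = ∫₀¹ ρ^u A ρ^(1-u) du` (entrywise Bochner integral). -/
noncomputable def kubo (ρ A : Matrix (Fin n) (Fin n) ℂ) : Matrix (Fin n) (Fin n) ℂ :=
  ∫ u in (0:ℝ)..1, mpow ρ u * A * mpow ρ (1 - u)

/-- The chart centered at `ρ`: `c_ρ(σ) = log σ - log ρ + D(ρ‖σ)·I`. -/
noncomputable def chart (ρ σ : Matrix (Fin n) (Fin n) ℂ) : Matrix (Fin n) (Fin n) ℂ :=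
  mlog σ - mlog ρ + relEnt ρ σ • (1 : Matrix (Fin n) (Fin n) ℂ)

/-- The normalization `α(t) = log Tr exp((1-t)·log ρ + t·log σ)` of the exponential arc. -/
noncomputable def alpha (ρ σ : Matrix (Fin n) (Fin n) ℂ) (t : ℝ) : ℝ :=
  Real.log (Matrix.trace (mexp ((1 - t) • mlog ρ + t • mlog σ))).re

/-- The exponential arc connecting `σ` to `ρ`:
`σ_t = exp((1-t)·log ρ + t·log σ - α(t)·I)`. -/
noncomputable def arc (ρ σ : Matrix (Fin n) (Fin n) ℂ) (t : ℝ) : Matrix (Fin n) (Fin n) ℂ :=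
  mexp ((1 - t) • mlog ρ + t • mlog σ - alpha ρ σ t • (1 : Matrix (Fin n) (Fin n) ℂ))

/-- The potential `Φ_ρ(A) = log Tr exp(log ρ + A)`. -/
noncomputable def potential (ρ A : Matrix (Fin n) (Fin n) ℂ) : ℝ :=
  Real.log (Matrix.trace (mexp (mlog ρ + A))).re

/-- The density matrix `τ_A = exp(log ρ + A) / Tr exp(log ρ + A)`. -/
noncomputable def tauOf (ρ A : Matrix (Fin n) (Fin n) ℂ) : Matrix (Fin n) (Fin n) ℂ :=
  (Matrix.trace (mexp (mlog ρ + A)))⁻¹ • mexp (mlog ρ + A)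

/-! In an eigenbasis of `ρ` the Kubo transform acts entrywise, multiplying the `(i, j)` entry by
the positive weight `∫₀¹ λᵢ^u λⱼ^(1-u) du`; hence it is injective and the two charts agree. Then
`log σ = log τ + c • 1` with `c = D(ρ‖τ) - D(ρ‖σ)`, so `σ = e^c τ`, and comparing traces
gives `c = 0`. -/

open Matrix

lemma mexp_cfc {A : Matrix (Fin n) (Fin n) ℂ} (hA : A.IsHermitian) (f : ℝ → ℝ) :
    mexp (cfc f A) = cfc (Real.exp ∘ f) A := by
  rw [hA.cfc_eq, hA.cfc_eq, IsHermitian.cfc, IsHermitian.cfc, mexp]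
  simp only [Unitary.conjStarAlgAut_apply]
  refine (Matrix.exp_units_conj (Unitary.toUnits hA.eigenvectorUnitary) _).trans ?_
  rw [exp_diagonal]
  congr 3
  ext i
  simp [← Complex.exp_eq_exp_ℂ, Complex.ofReal_exp]

lemma mexp_mlog {σ : Matrix (Fin n) (Fin n) ℂ} (hσ : σ.PosDef) : mexp (mlog σ) = σ := by
  rw [mlog, mexp_cfc hσ.1]
  conv_rhs => rw [← cfc_id' ℝ σ hσ.1.isSelfAdjoint]
  refine cfc_congr fun x hx => Real.exp_log ?_
  rw [hσ.1.spectrum_real_eq_range_eigenvalues] at hx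
  obtain ⟨i, rfl⟩ := hx
  exact hσ.eigenvalues_pos i

lemma mexp_add_smul_one (A : Matrix (Fin n) (Fin n) ℂ) (c : ℝ) :
    mexp (A + c • 1) = Real.exp c • mexp A := by
  rw [mexp, mexp, Matrix.exp_add_of_commute _ _ ((Commute.one_right A).smul_right c),
    ← Complex.coe_smul, smul_one_eq_diagonal, exp_diagonal]
  have : (NormedSpace.exp fun _ : Fin n => (c : ℂ)) = fun _ => ((Real.exp c : ℝ) : ℂ) := by
    ext; simp [← Complex.exp_eq_exp_ℂ, Complex.ofReal_exp]
  rw [this, ← smul_one_eq_diagonal, mul_smul_one, Complex.coe_smul]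

lemma integral_rpow_mul_rpow_pos {a b : ℝ} (ha : 0 < a) (hb : 0 < b) :
    0 < ∫ u in (0:ℝ)..1, a ^ u * b ^ (1 - u) := by
  have hcont : Continuous fun u : ℝ => a ^ u * b ^ (1 - u) :=
    (Real.continuous_const_rpow ha.ne').mul
      ((Real.continuous_const_rpow hb.ne').comp (continuous_sub_left 1))
  exact intervalIntegral.intervalIntegral_pos_of_pos (hcont.intervalIntegrable 0 1)
    (fun u => by positivity) zero_lt_one

section Kubo

variable {ρ : Matrix (Fin n) (Fin n) ℂ} (hρ : ρ.PosDef)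
include hρ

lemma mpow_eq_conj_diagonal (u : ℝ) :
    mpow ρ u = Unitary.conjStarAlgAut ℂ _ hρ.1.eigenvectorUnitary
      (diagonal fun i => ((hρ.1.eigenvalues i ^ u : ℝ) : ℂ)) := by
  rw [mpow, hρ.1.cfc_eq]
  rfl

lemma continuous_mpow : Continuous (mpow ρ) := by
  simp only [funext (mpow_eq_conj_diagonal hρ), Unitary.conjStarAlgAut_apply]
  refine (continuous_const.matrix_mul (continuous_pi fun i => ?_).matrix_diagonal).matrix_mul
    continuous_const
  exact Complex.continuous_ofReal.comp
    (Real.continuous_const_rpow (hρ.eigenvalues_pos i).ne')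

lemma kubo_eigenbasis_apply (A : Matrix (Fin n) (Fin n) ℂ) (i j : Fin n) :
    (star (hρ.1.eigenvectorUnitary : Matrix (Fin n) (Fin n) ℂ) * kubo ρ A *
        hρ.1.eigenvectorUnitary) i j =
      ((∫ u in (0:ℝ)..1, hρ.1.eigenvalues i ^ u * hρ.1.eigenvalues j ^ (1 - u) : ℝ) : ℂ) *
        (star (hρ.1.eigenvectorUnitary : Matrix (Fin n) (Fin n) ℂ) * A *
          hρ.1.eigenvectorUnitary) i j := by
  simp only [← Unitary.conjStarAlgAut_symm_apply (S := ℂ)]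
  set e := Unitary.conjStarAlgAut ℂ (Matrix (Fin n) (Fin n) ℂ) hρ.1.eigenvectorUnitary
  let L : Matrix (Fin n) (Fin n) ℂ →L[ℂ] ℂ :=
    (entryLinearMap ℂ ℂ i j ∘ₗ e.symm.toAlgEquiv.toLinearMap).toContinuousLinearMap
  have hint := (((continuous_mpow hρ).matrix_mul (continuous_const (y := A))).matrix_mul
      ((continuous_mpow hρ).comp' (continuous_sub_left 1))).intervalIntegrable (μ := volume) 0 1
  change L (kubo ρ A) = _
  rw [kubo]
  refine (ContinuousLinearMap.intervalIntegral_comp_comm L hint).symm.trans ?_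
  have hpt : ∀ u : ℝ, e.symm (mpow ρ u * A * mpow ρ (1 - u)) i j =
      ((hρ.1.eigenvalues i ^ u * hρ.1.eigenvalues j ^ (1 - u) : ℝ) : ℂ) * e.symm A i j := by
    intro u
    rw [map_mul, map_mul, mpow_eq_conj_diagonal hρ, mpow_eq_conj_diagonal hρ,
      StarAlgEquiv.symm_apply_apply, StarAlgEquiv.symm_apply_apply, mul_diagonal, diagonal_mul]
    push_cast
    ring
  change ∫ u in (0:ℝ)..1, e.symm (mpow ρ u * A * mpow ρ (1 - u)) i j = _
  rw [intervalIntegral.integral_congr fun u _ => hpt u, intervalIntegral.integral_mul_const,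
    intervalIntegral.integral_ofReal]

theorem kubo_injective : Function.Injective (kubo ρ) := by
  intro A B hAB
  have hconj : star (hρ.1.eigenvectorUnitary : Matrix (Fin n) (Fin n) ℂ) * A *
      hρ.1.eigenvectorUnitary =
      star (hρ.1.eigenvectorUnitary : Matrix (Fin n) (Fin n) ℂ) * B * hρ.1.eigenvectorUnitary := by
    ext i j
    have hij := kubo_eigenbasis_apply hρ A i j
    rw [hAB, kubo_eigenbasis_apply hρ B i j] at hij
    have hw := integral_rpow_mul_rpow_pos (hρ.eigenvalues_pos i) (hρ.eigenvalues_pos j)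
    exact (mul_left_cancel₀ (Complex.ofReal_ne_zero.2 hw.ne') hij).symm
  simp only [← Unitary.conjStarAlgAut_symm_apply (S := ℂ)] at hconj
  exact EquivLike.injective _ hconj

end Kubo

lemma eq_of_mlog_eq_add_smul_one {σ τ : Matrix (Fin n) (Fin n) ℂ} (hσ : σ.PosDef)
    (hσ1 : σ.trace = 1) (hτ : τ.PosDef) (hτ1 : τ.trace = 1) {c : ℝ}
    (h : mlog σ = mlog τ + c • 1) : σ = τ := by
  have hστ : σ = Real.exp c • τ := by
    rw [← mexp_mlog hσ, h, mexp_add_smul_one, mexp_mlog hτ]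
  have hc : Real.exp c = 1 := by
    have htr := congrArg trace hστ
    rw [trace_smul, hσ1, hτ1, Complex.real_smul, mul_one] at htr
    exact_mod_cast htr.symm
  rw [hστ, hc, one_smul]

theorem chart_injOn (ρ : Matrix (Fin n) (Fin n) ℂ) :
    Set.InjOn (chart ρ) {σ | σ.PosDef ∧ σ.trace = 1} := by
  rintro σ ⟨hσ, hσ1⟩ τ ⟨hτ, hτ1⟩ h
  refine eq_of_mlog_eq_add_smul_one hσ hσ1 hτ hτ1 (c := relEnt ρ τ - relEnt ρ σ) ?_
  simp only [chart] at h
  linear_combination (norm := module) h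

theorem stmt8_general (n : ℕ) (ρ σ τ : Matrix (Fin n) (Fin n) ℂ)
    (hρ : ρ.PosDef) (hσ : σ.PosDef) (hσ1 : σ.trace = 1)
    (hτ : τ.PosDef) (hτ1 : τ.trace = 1)
    (h : kubo ρ (chart ρ σ) = kubo ρ (chart ρ τ)) :
    σ = τ :=
  chart_injOn ρ ⟨hσ, hσ1⟩ ⟨hτ, hτ1⟩ (kubo_injective hρ h)

/-- two exponential arcs starting at `ρ` with the same tangent vector at
`t = 0` coincide: `[c_ρ(σ)]^K_ρ = [c_ρ(τ)]^K_ρ` implies `σ = τ`. -/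
theorem stmt8 (n : ℕ) (hn : 1 ≤ n) (ρ σ τ : Matrix (Fin n) (Fin n) ℂ)
    (hρ : ρ.PosDef) (hρ1 : ρ.trace = 1) (hσ : σ.PosDef) (hσ1 : σ.trace = 1)
    (hτ : τ.PosDef) (hτ1 : τ.trace = 1)
    (h : kubo ρ (chart ρ σ) = kubo ρ (chart ρ τ)) :
    σ = τ :=
  stmt8_general n ρ σ τ hρ hσ hσ1 hτ hτ1 h
end

section
/- Let ρ be a non-degenerate density matrix and A, B Hermitian n×n matrices, and define τ_A = exp(log ρ + A) / Tr exp(log ρ + A). Then the matrix-valued map t ↦ τ_{A + tB} is differentiable at t = 0 with derivative equal to [ B − (Tr τ_A B)·I ]^K_{τ_A} = ∫₀¹ τ_A^u ( B − (Tr τ_A B)·I ) τ_A^{1−u} du. -/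
open MeasureTheory
open scoped ComplexOrder

attribute [local instance] Matrix.frobeniusNormedAddCommGroup Matrix.frobeniusNormedSpace

variable {n : ℕ}

/-!
Put `L = log ρ + A` and `H = L - log (Tr e^L) • I`, so that `τ_A = e^H` and `Tr e^H = 1`. A Gibbs
state `e^L / Tr e^L` does not change when a real multiple of `I` is added to `L`, hence
`τ_{A + tB} = e^{H + tB} / Tr e^{H + tB}`. By Duhamel's formula the derivative of `e^{H + tB}` at
`t = 0` is `∫₀¹ e^{sH} B e^{(1-s)H} ds`, which is the Kubo transform `[B]^K_{τ_A}` because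
`τ_A^u = e^{uH}`. Differentiating the normalisation subtracts `Tr([B]^K_{τ_A}) • τ_A`; cyclicity of
the trace gives `Tr [B]^K_{τ_A} = Tr τ_A B`, and `[I]^K_{τ_A} = τ_A`.
-/

open NormedSpace

section BanachAlgebra

variable {𝔸 : Type*} [NormedRing 𝔸] [NormedAlgebra ℝ 𝔸] [CompleteSpace 𝔸]

theorem hasDerivAt_exp_smul_mul_exp_one_sub_smul (X Z : 𝔸) (s : ℝ) :
    HasDerivAt (fun s : ℝ => exp (s • X) * exp ((1 - s) • Z))
      (exp (s • X) * (X - Z) * exp ((1 - s) • Z)) s := by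
  have hZ : HasDerivAt (fun s : ℝ => exp ((1 - s) • Z)) (-(Z * exp ((1 - s) • Z))) s := by
    simpa [Function.comp_def] using (hasDerivAt_exp_smul_const' (𝕂 := ℝ) Z (1 - s)).scomp s
      ((hasDerivAt_id s).const_sub 1)
  refine ((hasDerivAt_exp_smul_const (𝕂 := ℝ) X s).mul hZ).congr_deriv ?_
  noncomm_ring

variable [NormedAlgebra ℚ 𝔸]

theorem exp_smul_mul_exp_one_sub_smul (X : 𝔸) (s : ℝ) :
    exp (s • X) * exp ((1 - s) • X) = exp X := by
  rw [← exp_add_of_commute (((Commute.refl X).smul_left s).smul_right (1 - s)), ← add_smul,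
    add_sub_cancel, one_smul]

theorem exp_one_sub_smul_mul_exp_smul (X : 𝔸) (s : ℝ) :
    exp ((1 - s) • X) * exp (s • X) = exp X := by
  simpa using exp_smul_mul_exp_one_sub_smul X (1 - s)

theorem exp_add_smul_one (X : 𝔸) (c : ℝ) : exp (X + c • 1) = Real.exp c • exp X := by
  rw [exp_add_of_commute ((Commute.one_right X).smul_right c), ← Algebra.algebraMap_eq_smul_one,
    ← map_exp (algebraMap ℝ 𝔸) (continuous_algebraMap ℝ 𝔸), ← Real.exp_eq_exp_ℝ,
    Algebra.algebraMap_eq_smul_one, mul_smul_comm, mul_one]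

theorem continuous_exp_smul_mul_mul_exp_one_sub_smul (X Y Z : 𝔸) :
    Continuous fun s : ℝ => exp (s • X) * Y * exp ((1 - s) • Z) := by
  fun_prop

/-- Duhamel's formula. -/
theorem exp_add_sub_exp (X Y : 𝔸) :
    exp (X + Y) - exp X = ∫ s in (0:ℝ)..1, exp (s • (X + Y)) * Y * exp ((1 - s) • X) := by
  rw [intervalIntegral.integral_eq_sub_of_hasDerivAt
    (fun s _ => by simpa using hasDerivAt_exp_smul_mul_exp_one_sub_smul (X + Y) X s)
    ((continuous_exp_smul_mul_mul_exp_one_sub_smul _ _ _).intervalIntegrable 0 1)]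
  simp

theorem hasDerivAt_exp_add_smul (X Y : 𝔸) :
    HasDerivAt (fun t : ℝ => exp (X + t • Y))
      (∫ s in (0:ℝ)..1, exp (s • X) * Y * exp ((1 - s) • X)) 0 := by
  set I : ℝ → 𝔸 := fun t => ∫ s in (0:ℝ)..1, exp (s • (X + t • Y)) * Y * exp ((1 - s) • X)
  have hI : Continuous I :=
    intervalIntegral.continuous_parametric_intervalIntegral_of_continuous' (by fun_prop) 0 1
  have hslope : ∀ t ≠ 0, slope (fun t : ℝ => exp (X + t • Y)) 0 t = I t := by
    intro t ht
    rw [slope_def_module, zero_smul, add_zero, sub_zero, exp_add_sub_exp]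
    simp_rw [mul_smul_comm, smul_mul_assoc, intervalIntegral.integral_smul, inv_smul_smul₀ ht, I]
  rw [hasDerivAt_iff_tendsto_slope]
  refine (((hI.tendsto 0).mono_left nhdsWithin_le_nhds).congr' ?_).trans (by simp [I])
  filter_upwards [self_mem_nhdsWithin] with t ht
  exact (hslope t ht).symm

end BanachAlgebra

-- The spectral lemmas use the `L2Operator` norm, whose topology is definitionally that of `Matrix`,
-- as the continuous functional calculus requires.
open scoped Matrix.Norms.L2Operator in
theorem Matrix.IsHermitian.trace_exp_pos {m : Type*} [Fintype m] [DecidableEq m] [Nonempty m]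
    {H : Matrix m m ℂ} (hH : H.IsHermitian) : 0 < (NormedSpace.exp H).trace := by
  open scoped MatrixOrder in
  have hpos : IsStrictlyPositive (NormedSpace.exp H) := by
    rw [← CFC.real_exp_eq_normedSpace_exp hH.isSelfAdjoint]
    exact (cfc_isStrictlyPositive_iff Real.exp H).mpr fun x _ => Real.exp_pos x
  exact (Matrix.isStrictlyPositive_iff_posDef.mp hpos).trace_pos

open scoped Matrix.Norms.L2Operator in
theorem mpow_exp {H : Matrix (Fin n) (Fin n) ℂ} (hH : IsSelfAdjoint H) (u : ℝ) :
    mpow (exp H) u = exp (u • H) := by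
  have hcont : ContinuousOn (· ^ u) (Real.exp '' spectrum ℝ H) := by
    rintro _ ⟨x, -, rfl⟩
    exact (Real.continuousAt_rpow_const _ u (Or.inl (Real.exp_pos x).ne')).continuousWithinAt
  rw [mpow, ← CFC.real_exp_eq_normedSpace_exp hH, ← cfc_comp' _ _ H hcont,
    ← CFC.real_exp_eq_normedSpace_exp ((IsSelfAdjoint.all u).smul hH),
    ← cfc_comp_smul u Real.exp H]
  congr 1 with x
  rw [← Real.exp_mul, smul_eq_mul, mul_comm]

section Trace

variable {m : Type*} [Fintype m]

theorem Matrix.IsHermitian.ofReal_re_trace_mul {A B : Matrix m m ℂ}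
    (hA : A.IsHermitian) (hB : B.IsHermitian) : (((A * B).trace.re : ℝ) : ℂ) = (A * B).trace := by
  refine Complex.conj_eq_iff_re.mp ?_
  rw [← Complex.star_def, ← Matrix.trace_conjTranspose, Matrix.conjTranspose_mul, hA.eq, hB.eq,
    Matrix.trace_mul_comm]

theorem Matrix.trace_intervalIntegral {f : ℝ → Matrix m m ℂ} (hf : Continuous f) (a b : ℝ) :
    (∫ s in a..b, f s).trace = ∫ s in a..b, (f s).trace :=
  ((Matrix.traceLinearMap m ℝ ℂ).toContinuousLinearMap.intervalIntegral_comp_comm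
    (hf.intervalIntegrable a b)).symm

theorem hasDerivAt_trace_inv_smul {f : ℝ → Matrix m m ℂ} {f' : Matrix m m ℂ} {t : ℝ}
    (hf : HasDerivAt f f' t) (h1 : (f t).trace = 1) :
    HasDerivAt (fun t => (f t).trace⁻¹ • f t) (f' - f'.trace • f t) t := by
  have htr : HasDerivAt (fun t => (f t).trace) f'.trace t :=
    (Matrix.traceLinearMap m ℝ ℂ).toContinuousLinearMap.hasFDerivAt.comp_hasDerivAt t hf
  refine ((htr.fun_inv (by simp [h1])).smul hf).congr_deriv ?_
  simp [h1, sub_eq_add_neg]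

end Trace

attribute [local instance] Matrix.frobeniusNormedRing Matrix.frobeniusNormedAlgebra

section GibbsState

variable {m : Type*} [Fintype m] [DecidableEq m]

-- `Matrix`'s own ring and topology instances do not unify with those of `Matrix.frobeniusNormedRing`
-- at instance transparency, so `rw` needs the Banach-algebra lemmas restated for matrices.
theorem Matrix.exp_add_smul_one (X : Matrix m m ℂ) (c : ℝ) :
    exp (X + c • 1) = Real.exp c • exp X :=
  _root_.exp_add_smul_one X c

theorem Matrix.exp_smul_mul_exp_one_sub_smul (X : Matrix m m ℂ) (s : ℝ) :
    exp (s • X) * exp ((1 - s) • X) = exp X :=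
  _root_.exp_smul_mul_exp_one_sub_smul X s

theorem Matrix.exp_one_sub_smul_mul_exp_smul (X : Matrix m m ℂ) (s : ℝ) :
    exp ((1 - s) • X) * exp (s • X) = exp X :=
  _root_.exp_one_sub_smul_mul_exp_smul X s

theorem Matrix.continuous_exp_smul_mul_mul_exp_one_sub_smul (X Y Z : Matrix m m ℂ) :
    Continuous fun s : ℝ => exp (s • X) * Y * exp ((1 - s) • Z) :=
  _root_.continuous_exp_smul_mul_mul_exp_one_sub_smul X Y Z

noncomputable def gibbsState (L : Matrix m m ℂ) : Matrix m m ℂ :=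
  (exp L).trace⁻¹ • exp L

theorem gibbsState_add_smul_one (L : Matrix m m ℂ) (c : ℝ) :
    gibbsState (L + c • 1) = gibbsState L := by
  rw [gibbsState, gibbsState, Matrix.exp_add_smul_one, ← Complex.coe_smul, Matrix.trace_smul,
    smul_eq_mul, smul_smul, mul_inv, mul_comm, ← mul_assoc,
    mul_inv_cancel₀ (Complex.ofReal_ne_zero.mpr (Real.exp_pos c).ne'), one_mul]

theorem trace_gibbsState {L : Matrix m m ℂ} (hL : (exp L).trace ≠ 0) :
    (gibbsState L).trace = 1 := by
  rw [gibbsState, Matrix.trace_smul, smul_eq_mul, inv_mul_cancel₀ hL]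

theorem Matrix.IsHermitian.gibbsState_eq_exp [Nonempty m] {L : Matrix m m ℂ}
    (hL : L.IsHermitian) :
    gibbsState L = NormedSpace.exp (L - Real.log (NormedSpace.exp L).trace.re • 1) := by
  have hpos := hL.trace_exp_pos
  have hre : (((NormedSpace.exp L).trace.re : ℝ) : ℂ) = (NormedSpace.exp L).trace :=
    (Complex.eq_re_of_ofReal_le hpos.le).symm
  rw [sub_eq_add_neg, ← neg_smul, Matrix.exp_add_smul_one, Real.exp_neg,
    Real.exp_log (Complex.pos_iff.mp hpos).1, gibbsState, ← Complex.coe_smul, Complex.ofReal_inv,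
    hre]

end GibbsState

section Kubo

variable {H : Matrix (Fin n) (Fin n) ℂ}

theorem kubo_exp (hH : IsSelfAdjoint H) (X : Matrix (Fin n) (Fin n) ℂ) :
    kubo (exp H) X = ∫ s in (0:ℝ)..1, exp (s • H) * X * exp ((1 - s) • H) := by
  simp_rw [kubo, mpow_exp hH]

theorem trace_kubo_exp (hH : IsSelfAdjoint H) (X : Matrix (Fin n) (Fin n) ℂ) :
    (kubo (exp H) X).trace = (exp H * X).trace := by
  rw [kubo_exp hH,
    Matrix.trace_intervalIntegral (Matrix.continuous_exp_smul_mul_mul_exp_one_sub_smul H X H)]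
  simp [Matrix.trace_mul_cycle _ X, Matrix.exp_one_sub_smul_mul_exp_smul]

theorem kubo_exp_sub_smul_one (hH : IsSelfAdjoint H) (X : Matrix (Fin n) (Fin n) ℂ) (c : ℝ) :
    kubo (exp H) (X - c • 1) = kubo (exp H) X - c • exp H := by
  have hsplit : ∀ s : ℝ, exp (s • H) * (X - c • 1) * exp ((1 - s) • H)
      = exp (s • H) * X * exp ((1 - s) • H) - c • exp H := fun s => by
    rw [mul_sub, sub_mul, mul_smul_comm, smul_mul_assoc, mul_one,
      Matrix.exp_smul_mul_exp_one_sub_smul]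
  simp_rw [kubo_exp hH, hsplit]
  rw [intervalIntegral.integral_sub
    ((Matrix.continuous_exp_smul_mul_mul_exp_one_sub_smul H X H).intervalIntegrable 0 1)
    intervalIntegrable_const]
  simp

end Kubo

theorem stmt18_general (n : ℕ) (hn : 1 ≤ n) (ρ : Matrix (Fin n) (Fin n) ℂ)
    (A B : Matrix (Fin n) (Fin n) ℂ) (hA : A.IsHermitian) (hB : B.IsHermitian) :
    HasDerivAt (fun t : ℝ => tauOf ρ (A + t • B))
      (kubo (tauOf ρ A)
        (B - (Matrix.trace (tauOf ρ A * B)).re • (1 : Matrix (Fin n) (Fin n) ℂ))) 0 := by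
  have : Nonempty (Fin n) := ⟨⟨0, hn⟩⟩
  have hL : (mlog ρ + A).IsHermitian := (cfc_predicate Real.log ρ).isHermitian.add hA
  set c := Real.log (exp (mlog ρ + A)).trace.re
  set H := mlog ρ + A - c • 1
  have hLH : mlog ρ + A = H + c • 1 := (sub_add_cancel _ _).symm
  have hH : IsSelfAdjoint H := hL.isSelfAdjoint.sub ((IsSelfAdjoint.all c).smul (.one _))
  have hτ : tauOf ρ A = exp H := hL.gibbsState_eq_exp
  have hpath : (fun t : ℝ => tauOf ρ (A + t • B)) = fun t => gibbsState (H + t • B) := by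
    funext t
    rw [← gibbsState_add_smul_one _ c, add_right_comm, ← hLH, add_assoc]
    rfl
  have hexp : HasDerivAt (fun t : ℝ => exp (H + t • B)) (kubo (exp H) B) 0 := by
    rw [kubo_exp hH]
    exact hasDerivAt_exp_add_smul H B
  have htr : (exp (H + (0 : ℝ) • B)).trace = 1 := by
    rw [zero_smul, add_zero, ← hτ]
    exact trace_gibbsState hL.trace_exp_pos.ne'
  rw [hpath, hτ, kubo_exp_sub_smul_one hH, ← Complex.coe_smul,
    Matrix.IsHermitian.ofReal_re_trace_mul hH.isHermitian.exp hB, ← trace_kubo_exp hH]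
  simpa [gibbsState] using hasDerivAt_trace_inv_smul hexp htr

/-- `t ↦ τ_{A + tB}` is differentiable at `t = 0` with derivative
`[B - (Tr τ_A B)·I]^K_{τ_A}`. -/
theorem stmt18 (n : ℕ) (hn : 1 ≤ n) (ρ : Matrix (Fin n) (Fin n) ℂ)
    (hρ : ρ.PosDef) (hρ1 : ρ.trace = 1)
    (A B : Matrix (Fin n) (Fin n) ℂ) (hA : A.IsHermitian) (hB : B.IsHermitian) :
    HasDerivAt (fun t : ℝ => tauOf ρ (A + t • B))
      (kubo (tauOf ρ A)
        (B - (Matrix.trace (tauOf ρ A * B)).re • (1 : Matrix (Fin n) (Fin n) ℂ))) 0 :=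
  stmt18_general n hn ρ A B hA hB
end
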